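/- Let F be a finite field, let n, k, α be positive integers with k < n, set m = n - k, and let a_1,...,a_m, b_1,...,b_n be 2n - k pairwise distinct elements of F. Let A be the m × n Cauchy matrix with (i,j) entry 1/(a_i - b_j), let J = A ⊗ I_α (Kronecker product with the α × α identity), and let E be any mα × nα matrix over F all of whose entries lie in {0,1}. If |F| > C(n, n-k)·(n-k)·α (where C(n,n-k) is the binomial coefficient), then there exists ρ ∈ F such that for every subset S ⊆ {1,...,n} with |S| = m, the mα × mα block submatrix (J + ρ·E)(:,S) is invertible; consequently every nonzero vector in the kernel of J + ρ·E has block Hamming weight at least n - k + 1, i.e., the code defined by the parity-check matrix J + ρ·E is an MDS vector code. -/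

import Mathlib

open Kronecker

/-- The `mα × mα` block submatrix of an `mα × nα` matrix `H` (viewed as an `m × n` array of
`α × α` blocks) formed by the block columns indexed by a subset `S` of `{1,...,n}` of size `m`. -/
noncomputable def blockSub {F : Type*} {m n α : ℕ}
    (H : Matrix (Fin m × Fin α) (Fin n × Fin α) F)
    {S : Finset (Fin n)} (hS : S.card = m) :
    Matrix (Fin m × Fin α) (Fin m × Fin α) F :=
  H.submatrix id (fun p => ((S.orderIsoOfFin hS p.1 : Fin n), p.2))

/-!
For each `S`, `det (J + ρE)(:,S)` is a polynomial in `ρ` of degree at most `(n-k)α` whose constant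
term `det J(:,S) = (det A(:,S))^α` is nonzero, square Cauchy matrices being nonsingular. The
product of these `C(n, n-k)` polynomials is nonzero of degree less than `|F|`, so some `ρ` avoids
all their roots. A nonzero kernel vector supported on at most `n - k` blocks would then lie in the
kernel of one of the invertible matrices `(J + ρE)(:,S)`.
-/

open Polynomial Finset Matrix

/-- Barycentric Lagrange interpolation: if `∑ⱼ vⱼ / (x - bⱼ)` vanishes at the `card ι` distinct
points `aᵢ`, so does the interpolant through the nodes `bⱼ` with values `vⱼ / wⱼ` (`wⱼ` the nodal
weights), which has degree `< card ι`; hence it is zero and so is `v`. -/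
theorem Matrix.det_cauchy_ne_zero {F ι : Type*} [Field F] [Fintype ι] [DecidableEq ι]
    {a b : ι → F} (ha : Function.Injective a) (hb : Function.Injective b)
    (hab : ∀ i j, a i ≠ b j) : (of fun i j => (a i - b j)⁻¹).det ≠ 0 := by
  intro hdet
  obtain ⟨v, hv, hAv⟩ := exists_mulVec_eq_zero_iff.mpr hdet
  have hbinj : Set.InjOn b (univ : Finset ι) := hb.injOn
  have hw : ∀ j, Lagrange.nodalWeight univ b j ≠ 0 := fun j =>
    Lagrange.nodalWeight_ne_zero hbinj (mem_univ j)
  set r : ι → F := fun j => (Lagrange.nodalWeight univ b j)⁻¹ * v j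
  have hp : Lagrange.interpolate univ b r = 0 := by
    refine eq_zero_of_degree_lt_of_eval_index_eq_zero univ ha.injOn
      (Lagrange.degree_interpolate_lt r hbinj) fun i _ => ?_
    rw [Lagrange.eval_interpolate_not_at_node r fun j _ => hab i j]
    have hrow : ∑ j, (a i - b j)⁻¹ * v j = 0 := congrFun hAv i
    convert mul_zero _ using 2
    rw [← hrow]
    refine sum_congr rfl fun j _ => ?_
    rw [mul_assoc, mul_left_comm, mul_inv_cancel_left₀ (hw j)]
  refine hv (funext fun j => ?_)
  have hr : r j = 0 := by
    rw [← Lagrange.eval_interpolate_at_node r hbinj (mem_univ j), hp, eval_zero]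
  simpa [r, hw j] using hr

namespace Polynomial

variable {R ι : Type*} [CommRing R] [Fintype ι] [DecidableEq ι]

theorem eval_det_X_smul_add_C (A B : Matrix ι ι R) (ρ : R) :
    eval ρ (((X : R[X]) • A.map C + B.map C).det) = (ρ • A + B).det := by
  rw [← coe_evalRingHom, RingHom.map_det]
  congr 1
  ext i j
  simp only [RingHom.mapMatrix_apply, coe_evalRingHom, Matrix.map_apply, Matrix.add_apply,
    Matrix.smul_apply, smul_eq_mul, eval_add, eval_mul, eval_X, eval_C]

theorem det_X_smul_add_C_ne_zero (A : Matrix ι ι R) {B : Matrix ι ι R} (hB : B.det ≠ 0) :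
    ((X : R[X]) • A.map C + B.map C).det ≠ 0 := fun h =>
  hB (by rw [← coeff_det_X_add_C_zero A B, h, coeff_zero])

end Polynomial

theorem Matrix.exists_forall_det_add_smul_ne_zero {F ι κ : Type*} [Field F] [Fintype F]
    [Fintype ι] [DecidableEq ι] [Fintype κ] (M N : κ → Matrix ι ι F)
    (hM : ∀ t, (M t).det ≠ 0) (hF : Fintype.card κ * Fintype.card ι < Fintype.card F) :
    ∃ ρ : F, ∀ t, (M t + ρ • N t).det ≠ 0 := by
  set P : F[X] := ∏ t, ((X : F[X]) • (N t).map C + (M t).map C).det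
  have hP : P ≠ 0 := prod_ne_zero_iff.mpr fun t _ => det_X_smul_add_C_ne_zero _ (hM t)
  have hdeg : P.natDegree ≤ Fintype.card κ * Fintype.card ι := by
    refine (natDegree_prod_le _ _).trans ?_
    simpa [card_univ] using
      sum_le_card_nsmul univ _ _ fun t _ => natDegree_det_X_add_C_le (N t) (M t)
  obtain ⟨ρ, hρ⟩ := exists_eval_ne_zero_of_natDegree_lt_card P hP
    (by rw [Cardinal.mk_fintype]; exact_mod_cast hdeg.trans_lt hF)
  refine ⟨ρ, fun t => ?_⟩
  rw [add_comm, ← eval_det_X_smul_add_C]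
  exact (prod_ne_zero_iff.mp (by rwa [eval_prod] at hρ)) t (mem_univ t)

theorem Matrix.submatrix_id_mulVec_comp_of_support_subset {R ι κ ι' : Type*}
    [NonUnitalNonAssocSemiring R] [Fintype κ] [Fintype ι'] (H : Matrix ι κ R) (e : ι' ↪ κ)
    {c : κ → R} (hc : Function.support c ⊆ Set.range e) :
    H.submatrix id e *ᵥ (c ∘ e) = H *ᵥ c := by
  classical
  ext r
  simp only [Matrix.mulVec, dotProduct, Matrix.submatrix_apply, id, Function.comp_apply]
  rw [← sum_map univ e (fun q => H r q * c q)]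
  refine sum_subset (subset_univ _) fun q _ hq => ?_
  have hcq : c q = 0 := Function.notMem_support.mp fun h => hq (by simpa using hc h)
  rw [hcq, mul_zero]

section BlockSub

variable {F : Type*} [Field F] {m n α : ℕ}

theorem blockSub_add_smul (H E : Matrix (Fin m × Fin α) (Fin n × Fin α) F) (ρ : F)
    {S : Finset (Fin n)} (hS : S.card = m) :
    blockSub (H + ρ • E) hS = blockSub H hS + ρ • blockSub E hS :=
  rfl

theorem blockSub_kronecker (A : Matrix (Fin m) (Fin n) F) (B : Matrix (Fin α) (Fin α) F)
    {S : Finset (Fin n)} (hS : S.card = m) :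
    blockSub (A ⊗ₖ B) hS = A.submatrix id (fun i => (S.orderIsoOfFin hS i : Fin n)) ⊗ₖ B :=
  rfl

theorem succ_le_ncard_nonzero_blocks_of_mulVec_eq_zero (hmn : m ≤ n)
    (H : Matrix (Fin m × Fin α) (Fin n × Fin α) F)
    (hH : ∀ (S : Finset (Fin n)) (hS : S.card = m), (blockSub H hS).det ≠ 0)
    {c : Fin n × Fin α → F} (hHc : H *ᵥ c = 0) (hc : c ≠ 0) :
    m + 1 ≤ {i : Fin n | ∃ j : Fin α, c (i, j) ≠ 0}.ncard := by
  classical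
  by_contra! hsmall
  set T := {i : Fin n | ∃ j : Fin α, c (i, j) ≠ 0}.toFinset
  obtain ⟨S, hTS, -, hS⟩ := exists_subsuperset_card_eq (n := m) (subset_univ T)
    (by rw [Set.ncard_eq_toFinset_card'] at hsmall; convert Nat.le_of_lt_succ hsmall)
    (by simpa using hmn)
  let e : Fin m × Fin α ↪ Fin n × Fin α :=
    ⟨fun p => (S.orderIsoOfFin hS p.1, p.2), fun p q h => by
      simpa [Prod.ext_iff, Subtype.val_inj] using h⟩
  have hsupp : Function.support c ⊆ Set.range e := by
    rintro ⟨i, j⟩ hne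
    have hiS : i ∈ S := hTS (Set.mem_toFinset.mpr ⟨j, hne⟩)
    exact ⟨((S.orderIsoOfFin hS).symm ⟨i, hiS⟩, j), by
      show ((S.orderIsoOfFin hS ((S.orderIsoOfFin hS).symm ⟨i, hiS⟩) : Fin n), j) = (i, j)
      rw [OrderIso.apply_symm_apply]⟩
  have hce : c ∘ e = 0 := eq_zero_of_mulVec_eq_zero (hH S hS)
    ((submatrix_id_mulVec_comp_of_support_subset H e hsupp).trans hHc)
  refine hc (funext fun q => ?_)
  by_contra hq
  obtain ⟨p, rfl⟩ := hsupp hq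
  exact hq (congrFun hce p)

end BlockSub

theorem exists_rho_mds_general
    {F : Type*} [Field F] [Fintype F] {n k α : ℕ}
    (a : Fin (n - k) → F) (b : Fin n → F)
    (hdistinct : Function.Injective (Sum.elim a b))
    (E : Matrix (Fin (n - k) × Fin α) (Fin n × Fin α) F)
    (hF : Nat.choose n (n - k) * ((n - k) * α) < Fintype.card F) :
    ∃ ρ : F,
      (∀ (S : Finset (Fin n)) (hS : S.card = n - k),
        IsUnit (blockSub
          ((Matrix.of fun i j => (a i - b j)⁻¹) ⊗ₖ (1 : Matrix (Fin α) (Fin α) F) + ρ • E)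
          hS).det) ∧
      ∀ c : Fin n × Fin α → F,
        ((Matrix.of fun i j => (a i - b j)⁻¹) ⊗ₖ (1 : Matrix (Fin α) (Fin α) F)
          + ρ • E).mulVec c = 0 → c ≠ 0 →
        n - k + 1 ≤ {i : Fin n | ∃ j : Fin α, c (i, j) ≠ 0}.ncard := by
  set J := (Matrix.of fun i j => (a i - b j)⁻¹) ⊗ₖ (1 : Matrix (Fin α) (Fin α) F)
  have hJ : ∀ (S : Finset (Fin n)) (hS : S.card = n - k), (blockSub J hS).det ≠ 0 := by
    intro S hS
    rw [blockSub_kronecker, det_kronecker, det_one, one_pow, mul_one]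
    exact pow_ne_zero _ (det_cauchy_ne_zero (hdistinct.comp Sum.inl_injective)
      ((hdistinct.comp Sum.inr_injective).comp (Subtype.val_injective.comp
        (S.orderIsoOfFin hS).injective)) fun i j h => Sum.inl_ne_inr (hdistinct h))
  obtain ⟨ρ, hρ⟩ := exists_forall_det_add_smul_ne_zero
    (fun S : {S : Finset (Fin n) // S.card = n - k} => blockSub J S.2)
    (fun S => blockSub E S.2) (fun S => hJ S.1 S.2) (by simpa using hF)
  have hdet : ∀ (S : Finset (Fin n)) (hS : S.card = n - k),
      (blockSub (J + ρ • E) hS).det ≠ 0 :=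
    fun S hS => blockSub_add_smul J E ρ hS ▸ hρ ⟨S, hS⟩
  exact ⟨ρ, fun S hS => (hdet S hS).isUnit, fun c hc hc0 =>
    succ_le_ncard_nonzero_blocks_of_mulVec_eq_zero (Nat.sub_le n k) _ hdet hc hc0⟩

/-- for `J = A ⊗ I_α` with `A` an `(n-k) × n` Cauchy matrix, and `E` any
`(n-k)α × nα` matrix with entries in `{0,1}`, if `|F| > C(n, n-k)·(n-k)·α` then there is a
scalar `ρ` such that every block submatrix of `J + ρE` on `n - k` block columns is invertible;
consequently `J + ρE` is the parity check matrix of an MDS vector code: every nonzero vector in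
its kernel has block Hamming weight at least `n - k + 1`. -/
theorem exists_rho_mds
    {F : Type*} [Field F] [Fintype F] {n k α : ℕ}
    (hk : 0 < k) (hα : 0 < α) (hkn : k < n)
    (a : Fin (n - k) → F) (b : Fin n → F)
    (hdistinct : Function.Injective (Sum.elim a b))
    (E : Matrix (Fin (n - k) × Fin α) (Fin n × Fin α) F)
    (hE : ∀ p q, E p q = 0 ∨ E p q = 1)
    (hF : Nat.choose n (n - k) * ((n - k) * α) < Fintype.card F) :
    ∃ ρ : F,
      (∀ (S : Finset (Fin n)) (hS : S.card = n - k),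
        IsUnit (blockSub
          ((Matrix.of fun i j => (a i - b j)⁻¹) ⊗ₖ (1 : Matrix (Fin α) (Fin α) F) + ρ • E)
          hS).det) ∧
      ∀ c : Fin n × Fin α → F,
        ((Matrix.of fun i j => (a i - b j)⁻¹) ⊗ₖ (1 : Matrix (Fin α) (Fin α) F)
          + ρ • E).mulVec c = 0 → c ≠ 0 →
        n - k + 1 ≤ {i : Fin n | ∃ j : Fin α, c (i, j) ≠ 0}.ncard :=
  exists_rho_mds_general a b hdistinct E hF
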